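/- arXiv:2205.06172 — 4 statements merged into one kernel-verified Lean document; each statement's English description precedes it below -/
import Mathlib

section
/- Let A and Q be finitely-valued random variables on a finite probability space, and let X_1, …, X_K be mutually independent random variables, each uniformly distributed on F_q^n, such that Q is independent of (X_1, …, X_K). Suppose W_1, …, W_N ∈ {1,…,K} and S_1, …, S_N ⊆ {1,…,K} satisfy, for each i ∈ {1,…,N}: W_i ∉ S_i, W_i ∉ ⋃_{j<i} (S_j ∪ {W_j}), and H(X_{W_i} | (A, Q, (X_k)_{k∈S_i})) = 0. Then H(A) ≥ N · n · log₂ q. -/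
open scoped Classical in
/-- Probability of an event `E` under the weight function `P` on a finite sample space. -/
noncomputable def pr {Ω : Type} [Fintype Ω] (P : Ω → ℝ) (E : Ω → Prop) : ℝ :=
  ∑ ω, if E ω then P ω else 0

/-- Shannon entropy (base 2) of a finitely-valued random variable `X`. -/
noncomputable def entH {Ω α : Type} [Fintype Ω] [Fintype α] (P : Ω → ℝ) (X : Ω → α) : ℝ :=
  (∑ x, Real.negMulLog (pr P fun ω => X ω = x)) / Real.log 2

/-- Conditional Shannon entropy (base 2): `H(X | Y) = H(X, Y) - H(Y)`. -/
noncomputable def condH {Ω α β : Type} [Fintype Ω] [Fintype α] [Fintype β]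
    (P : Ω → ℝ) (X : Ω → α) (Y : Ω → β) : ℝ :=
  entH P (fun ω => (X ω, Y ω)) - entH P Y

/-!
Let `M = {W_1, …, W_N}` and `E` its complement. Decoding in the order `i = 1, …, N`, the pair
`(A, (Q, X_E))` determines `X_M`: the side information `X_{S_i}` used at step `i` consists of
coordinates in `E` or coordinates `X_{W_j}`, `j < i`, that are already decoded. Hence
`H(A) ≥ H(X_M | Q, X_E)`, and this equals `N n log₂ q` because `X_M` is uniform on
`(F_q^n)^N` and independent of `(Q, X_E)`. The only inequality of information theory needed is
submodularity `H(X | Y, Z) ≤ H(X | Y)`, proved from Gibbs' inequality.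
-/

open Finset Real

section Probability

variable {Ω α β γ : Type} [Fintype Ω] [Fintype α] [Fintype β] [Fintype γ] {P : Ω → ℝ}

lemma pr_nonneg (hP0 : ∀ ω, 0 ≤ P ω) (E : Ω → Prop) : 0 ≤ pr P E :=
  sum_nonneg fun ω _ => by split_ifs <;> simp [hP0 ω]

lemma pr_congr {E E' : Ω → Prop} (h : ∀ ω, E ω ↔ E' ω) : pr P E = pr P E' := by
  rw [show E = E' from funext fun ω => propext (h ω)]

lemma pr_eq_sum_pr_and (E : Ω → Prop) (Z : Ω → γ) :
    pr P E = ∑ z, pr P (fun ω => E ω ∧ Z ω = z) := by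
  classical
  unfold pr
  rw [sum_comm]
  refine sum_congr rfl fun ω _ => ?_
  by_cases hE : E ω <;> simp [hE]

lemma sum_pr_eq_one (hP1 : ∑ ω, P ω = 1) (Y : Ω → γ) :
    ∑ y, pr P (fun ω => Y ω = y) = 1 := by
  have h := pr_eq_sum_pr_and (P := P) (fun _ => True) Y
  simp only [true_and] at h
  rw [← h, ← hP1]
  simp [pr]

end Probability

section Entropy

variable {Ω α β γ : Type} [Fintype Ω] [Fintype α] [Fintype β] [Fintype γ] {P : Ω → ℝ}

lemma entH_comp_of_injective {g : α → γ} (hg : Function.Injective g) (X : Ω → α) :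
    entH P (fun ω => g (X ω)) = entH P X := by
  unfold entH
  congr 1
  symm
  refine Fintype.sum_of_injective g hg (fun x => negMulLog (pr P fun ω => X ω = x))
    (fun y => negMulLog (pr P fun ω => g (X ω) = y)) (fun y hy => ?_) fun x => ?_
  · have hempty : ∀ ω, g (X ω) = y ↔ False := fun ω => iff_false_intro fun h => hy ⟨X ω, h⟩
    rw [pr_congr hempty]
    simp [pr]
  · exact congrArg _ (pr_congr fun ω => hg.eq_iff.symm)

lemma entH_pair_eq_add_of_indep (hP1 : ∑ ω, P ω = 1) (Y : Ω → β) (Z : Ω → γ)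
    (h : ∀ y z, pr P (fun ω => Y ω = y ∧ Z ω = z)
      = pr P (fun ω => Y ω = y) * pr P (fun ω => Z ω = z)) :
    entH P (fun ω => (Y ω, Z ω)) = entH P Y + entH P Z := by
  unfold entH
  rw [← add_div, Fintype.sum_prod_type]
  congr 1
  simp only [Prod.mk.injEq, h, negMulLog_mul, sum_add_distrib, ← sum_mul, ← mul_sum,
    sum_pr_eq_one hP1, one_mul]

lemma entH_eq_logb_card_of_uniform (X : Ω → α)
    (h : ∀ x, pr P (fun ω => X ω = x) = (Fintype.card α : ℝ)⁻¹) :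
    entH P X = logb 2 (Fintype.card α) := by
  simp only [entH, h, sum_const, card_univ, nsmul_eq_mul, negMulLog, log_inv, logb]
  rcases (Fintype.card α).eq_zero_or_pos with hα | hα
  · simp [hα]
  · field_simp

lemma negMulLog_sum_le {ι : Type*} (s : Finset ι) (f : ι → ℝ) (hf : ∀ i ∈ s, 0 ≤ f i) :
    negMulLog (∑ i ∈ s, f i) ≤ ∑ i ∈ s, negMulLog (f i) := by
  rw [negMulLog, neg_mul, sum_mul, ← sum_neg_distrib]
  refine sum_le_sum fun i hi => ?_
  rcases (hf i hi).eq_or_lt with h | h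
  · simp [← h]
  · have := log_le_log h (single_le_sum hf hi)
    rw [negMulLog]
    nlinarith

lemma entH_le_entH_pair (hP0 : ∀ ω, 0 ≤ P ω) (U : Ω → α) (Y : Ω → β) :
    entH P Y ≤ entH P (fun ω => (U ω, Y ω)) := by
  unfold entH
  gcongr ?_ / _
  rw [Fintype.sum_prod_type_right]
  refine sum_le_sum fun y _ => ?_
  rw [pr_eq_sum_pr_and (fun ω => Y ω = y) U]
  refine (negMulLog_sum_le _ _ fun u _ => pr_nonneg hP0 _).trans_eq ?_
  simp only [Prod.ext_iff, and_comm]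

end Entropy

section Submodularity

variable {α β γ : Type} [Fintype α] [Fintype β] [Fintype γ]

lemma negMulLog_add_mul_log_le {p q : ℝ} (hp : 0 ≤ p) (hq : 0 ≤ q) (hpq : 0 < p → 0 < q) :
    negMulLog p + p * log q ≤ q - p := by
  rcases hp.eq_or_lt with rfl | hp
  · simpa using hq
  have hq := hpq hp
  have h := mul_le_mul_of_nonneg_left (negMulLog_le_one_sub_self (div_nonneg hp.le hq.le)) hq.le
  have e : q * negMulLog (p / q) = negMulLog p + p * log q := by
    rw [negMulLog, negMulLog, log_div hp.ne' hq.ne']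
    field_simp
    ring
  rw [e] at h
  rwa [mul_sub, mul_one, mul_div_cancel₀ _ hq.ne'] at h

-- Gibbs' inequality against `a b / c`, which is the law making `X` and `Z` independent given `Y`
-- when `p`, `a`, `b`, `c` are the laws of `(X, Y, Z)`, `(X, Y)`, `(Y, Z)`, `Y`.
lemma negMulLog_add_mul_log_sub_le {p a b c : ℝ} (hp : 0 ≤ p) (ha : p ≤ a) (hb : p ≤ b)
    (hc : a ≤ c) : negMulLog p + p * log a + p * log b - p * log c ≤ a * b / c - p := by
  rcases hp.eq_or_lt with rfl | hp
  · simpa using div_nonneg (mul_nonneg ha hb) (ha.trans hc)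
  have ha' := hp.trans_le ha
  have hb' := hp.trans_le hb
  have hc' := ha'.trans_le hc
  have hq := div_pos (mul_pos ha' hb') hc'
  have h := negMulLog_add_mul_log_le hp.le hq.le fun _ => hq
  rw [log_div (mul_pos ha' hb').ne' hc'.ne', log_mul ha'.ne' hb'.ne'] at h
  linarith

-- For the law `p` of `(X, Y, Z)` this is `H(X,Y,Z) + H(Y) ≤ H(X,Y) + H(Y,Z)`.
lemma sum_negMulLog_add_sum_negMulLog_le (p : α → β → γ → ℝ) (hp : ∀ x y z, 0 ≤ p x y z) :
    ∑ x, ∑ y, ∑ z, negMulLog (p x y z) + ∑ y, negMulLog (∑ x, ∑ z, p x y z)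
      ≤ ∑ x, ∑ y, negMulLog (∑ z, p x y z) + ∑ y, ∑ z, negMulLog (∑ x, p x y z) := by
  set a : α → β → ℝ := fun x y => ∑ z, p x y z
  set b : β → γ → ℝ := fun y z => ∑ x, p x y z
  set c : β → ℝ := fun y => ∑ x, ∑ z, p x y z
  have ha : ∀ x y z, p x y z ≤ a x y := fun x y z =>
    single_le_sum (fun z _ => hp x y z) (mem_univ z)
  have hb : ∀ x y z, p x y z ≤ b y z := fun x y z =>
    single_le_sum (f := fun x => p x y z) (fun x _ => hp x y z) (mem_univ x)
  have hc : ∀ x y, a x y ≤ c y := fun x y =>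
    single_le_sum (f := fun x => a x y) (fun x _ => sum_nonneg fun z _ => hp x y z) (mem_univ x)
  have key : ∀ x y z, negMulLog (p x y z) + p x y z * log (a x y) + p x y z * log (b y z)
      - p x y z * log (c y) ≤ a x y * b y z / c y - p x y z := fun x y z =>
    negMulLog_add_mul_log_sub_le (hp x y z) (ha x y z) (hb x y z) (hc x y)
  have hq : ∀ x y, ∑ z, a x y * b y z / c y = a x y := by
    intro x y
    have hbc : ∑ z, b y z = c y := sum_comm
    rcases eq_or_ne (c y) 0 with hcy | hcy
    · have : a x y = 0 := le_antisymm (hcy ▸ hc x y) (sum_nonneg fun z _ => hp x y z)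
      simp [this]
    · rw [← sum_div, ← mul_sum, hbc, mul_div_cancel_right₀ _ hcy]
  have hA : ∑ x, ∑ y, ∑ z, p x y z * log (a x y) = -∑ x, ∑ y, negMulLog (a x y) := by
    simp only [← sum_mul, negMulLog, neg_mul, sum_neg_distrib, neg_neg]
    rfl
  have hB : ∑ x, ∑ y, ∑ z, p x y z * log (b y z) = -∑ y, ∑ z, negMulLog (b y z) := by
    rw [sum_comm, sum_congr rfl fun y _ => sum_comm]
    simp only [← sum_mul, negMulLog, neg_mul, sum_neg_distrib, neg_neg]
    rfl
  have hC : ∑ x, ∑ y, ∑ z, p x y z * log (c y) = -∑ y, negMulLog (c y) := by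
    rw [sum_comm]
    simp only [← sum_mul, negMulLog, neg_mul, sum_neg_distrib, neg_neg]
    rfl
  have hsum := sum_le_sum fun x (_ : x ∈ univ) => sum_le_sum fun y (_ : y ∈ univ) =>
    sum_le_sum fun z (_ : z ∈ univ) => key x y z
  simp only [sum_add_distrib, sum_sub_distrib, hA, hB, hC, hq] at hsum
  linarith

end Submodularity

section ConditionalEntropy

variable {Ω α β γ δ : Type} [Fintype Ω] [Fintype α] [Fintype β] [Fintype γ] [Fintype δ]
  {P : Ω → ℝ}

lemma entH_pair (X : Ω → α) (Y : Ω → β) : entH P (fun ω => (X ω, Y ω))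
    = (∑ x, ∑ y, negMulLog (pr P fun ω => X ω = x ∧ Y ω = y)) / log 2 := by
  simp only [entH, Fintype.sum_prod_type, Prod.mk.injEq]

lemma condH_nonneg (hP0 : ∀ ω, 0 ≤ P ω) (X : Ω → α) (Y : Ω → β) : 0 ≤ condH P X Y :=
  sub_nonneg.2 (entH_le_entH_pair hP0 X Y)

lemma condH_pair_le (hP0 : ∀ ω, 0 ≤ P ω) (X : Ω → α) (Y : Ω → β) (Z : Ω → γ) :
    condH P X (fun ω => (Y ω, Z ω)) ≤ condH P X Y := by
  set p := fun x y z => pr P (fun ω => X ω = x ∧ Y ω = y ∧ Z ω = z)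
  have hXY : ∀ x y, pr P (fun ω => X ω = x ∧ Y ω = y) = ∑ z, p x y z := fun x y => by
    rw [pr_eq_sum_pr_and _ Z]
    simp only [p, and_assoc]
  have hYZ : ∀ y z, pr P (fun ω => Y ω = y ∧ Z ω = z) = ∑ x, p x y z := fun y z => by
    rw [pr_eq_sum_pr_and _ X]
    exact sum_congr rfl fun x _ => pr_congr fun ω => by tauto
  have hY : ∀ y, pr P (fun ω => Y ω = y) = ∑ x, ∑ z, p x y z := fun y => by
    rw [pr_eq_sum_pr_and _ X]
    exact sum_congr rfl fun x _ => (pr_congr fun ω => and_comm).trans (hXY x y)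
  have h := sum_negMulLog_add_sum_negMulLog_le p fun x y z => pr_nonneg hP0 _
  rw [condH, condH, entH_pair, entH_pair, entH_pair, entH]
  simp only [Fintype.sum_prod_type, Prod.mk.injEq, hXY, hYZ, hY]
  rw [div_sub_div_same, div_sub_div_same, div_le_div_iff_of_pos_right (log_pos one_lt_two)]
  linarith

lemma condH_comp_left_of_injective {g : α → γ} (hg : Function.Injective g) (X : Ω → α)
    (Y : Ω → β) : condH P (fun ω => g (X ω)) Y = condH P X Y :=
  congrArg (· - entH P Y) (entH_comp_of_injective (hg.prodMap Function.injective_id)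
    fun ω => (X ω, Y ω))

lemma condH_comp_right_of_injective {g : β → γ} (hg : Function.Injective g) (X : Ω → α)
    (Y : Ω → β) : condH P X (fun ω => g (Y ω)) = condH P X Y := by
  rw [condH, condH, entH_comp_of_injective hg Y]
  exact congrArg (· - entH P Y)
    (entH_comp_of_injective (Function.injective_id.prodMap hg) fun ω => (X ω, Y ω))

lemma condH_chain (X : Ω → α) (Y : Ω → β) (Z : Ω → γ) :
    condH P (fun ω => (X ω, Y ω)) Z = condH P X (fun ω => (Y ω, Z ω)) + condH P Y Z := by
  have h : entH P (fun ω => ((X ω, Y ω), Z ω)) = entH P (fun ω => (X ω, (Y ω, Z ω))) :=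
    entH_comp_of_injective (Equiv.prodAssoc α β γ).symm.injective fun ω => (X ω, Y ω, Z ω)
  rw [condH, condH, condH, h]
  ring

lemma condH_le_of_comp (hP0 : ∀ ω, 0 ≤ P ω) (X : Ω → α) (Y : Ω → β) (Z : Ω → γ) (g : γ → β)
    (h : ∀ ω, Y ω = g (Z ω)) : condH P X Z ≤ condH P X Y := by
  obtain rfl : Y = fun ω => g (Z ω) := funext h
  calc condH P X Z = condH P X (fun ω => (g (Z ω), Z ω)) :=
        (condH_comp_right_of_injective (g := fun z => (g z, z))
          (fun z z' h => congrArg Prod.snd h) X Z).symm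
    _ ≤ condH P X (fun ω => g (Z ω)) := condH_pair_le hP0 X _ Z

lemma condH_le_entH (hP0 : ∀ ω, 0 ≤ P ω) (hP1 : ∑ ω, P ω = 1) (X : Ω → α) (Y : Ω → β) :
    condH P X Y ≤ entH P X := by
  have hunit : entH P (fun _ : Ω => ()) = 0 := by simp [entH, pr, hP1]
  have hX : condH P X (fun _ => ()) = entH P X := by
    rw [condH, hunit, sub_zero]
    exact entH_comp_of_injective (g := fun x => (x, ())) (fun x x' h => congrArg Prod.fst h) X
  calc condH P X Y = condH P X (fun ω => ((), Y ω)) :=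
        (condH_comp_right_of_injective (g := fun y => ((), y))
          (fun y y' h => congrArg Prod.snd h) X Y).symm
    _ ≤ condH P X (fun _ => ()) := condH_pair_le hP0 X _ Y
    _ = entH P X := hX

lemma condH_eq_zero_of_unique [Unique α] (X : Ω → α) (Y : Ω → β) : condH P X Y = 0 := by
  obtain rfl : X = fun _ => default := funext fun _ => Subsingleton.elim _ _
  exact sub_eq_zero.2 (entH_comp_of_injective (g := fun y => ((default : α), y))
    (fun y y' h => congrArg Prod.snd h) Y)

lemma condH_le_condH_pair_left (hP0 : ∀ ω, 0 ≤ P ω) (X : Ω → α) (Y : Ω → β) (Z : Ω → γ) :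
    condH P X Z ≤ condH P (fun ω => (X ω, Y ω)) Z := by
  have hg : Function.Injective fun t : β × α × γ => ((t.2.1, t.1), t.2.2) := fun s t h => by
    simp only [Prod.ext_iff] at h ⊢
    tauto
  refine sub_le_sub_right ?_ _
  calc entH P (fun ω => (X ω, Z ω)) ≤ entH P (fun ω => (Y ω, X ω, Z ω)) :=
        entH_le_entH_pair hP0 Y _
    _ = entH P (fun ω => ((X ω, Y ω), Z ω)) :=
        (entH_comp_of_injective hg fun ω => (Y ω, X ω, Z ω)).symm

lemma condH_le_entH_of_condH_eq_zero (hP0 : ∀ ω, 0 ≤ P ω) (hP1 : ∑ ω, P ω = 1)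
    {V : Ω → δ} {A : Ω → α} {C : Ω → γ} (h : condH P V (fun ω => (A ω, C ω)) = 0) :
    condH P V C ≤ entH P A :=
  calc condH P V C ≤ condH P (fun ω => (V ω, A ω)) C := condH_le_condH_pair_left hP0 V A C
    _ = condH P A C := by rw [condH_chain, h, zero_add]
    _ ≤ entH P A := condH_le_entH hP0 hP1 A C

end ConditionalEntropy

section UniformFamily

variable {Ω β ι V : Type} [Fintype Ω] [Fintype ι] [DecidableEq ι] [Fintype V]
  {P : Ω → ℝ} {Q : Ω → β} {X : ι → Ω → V}

lemma pr_and_restrict_eq_of_uniform [Nonempty V]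
    (hQX : ∀ b (f : ι → V), pr P (fun ω => Q ω = b ∧ ∀ i, X i ω = f i)
      = pr P (fun ω => Q ω = b) / Fintype.card V ^ Fintype.card ι)
    (T : Finset ι) (b : β) (g : T → V) :
    pr P (fun ω => Q ω = b ∧ ∀ k : T, X k ω = g k)
      = pr P (fun ω => Q ω = b) / Fintype.card V ^ T.card := by
  have hext : ∀ h : ↥Tᶜ → V,
      pr P (fun ω => (Q ω = b ∧ ∀ k : T, X k ω = g k) ∧ (fun k : ↥Tᶜ => X k ω) = h)
        = pr P (fun ω => Q ω = b) / Fintype.card V ^ Fintype.card ι := by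
    intro h
    rw [← hQX b fun i => if hi : i ∈ T then g ⟨i, hi⟩ else h ⟨i, mem_compl.2 hi⟩]
    refine pr_congr fun ω => ?_
    simp only [funext_iff, Subtype.forall]
    constructor
    · rintro ⟨⟨hb, hg⟩, hh⟩
      exact ⟨hb, fun i => by split_ifs with hi; exacts [hg i hi, hh i _]⟩
    · rintro ⟨hb, hX⟩
      exact ⟨⟨hb, fun i hi => by simpa [hi] using hX i⟩,
        fun i hi => by simpa [mem_compl.1 hi] using hX i⟩
  have hc : (Fintype.card V : ℝ) ≠ 0 := Nat.cast_ne_zero.2 Fintype.card_ne_zero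
  rw [pr_eq_sum_pr_and _ fun ω (k : ↥Tᶜ) => X k ω, sum_congr rfl fun h _ => hext h, sum_const,
    card_univ, Fintype.card_fun, Fintype.card_coe, nsmul_eq_mul, ← card_add_card_compl T]
  push_cast
  field_simp
  ring

lemma entH_pair_restrict_of_uniform [Fintype β] [Nonempty V] (hP1 : ∑ ω, P ω = 1)
    (hQX : ∀ b (f : ι → V), pr P (fun ω => Q ω = b ∧ ∀ i, X i ω = f i)
      = pr P (fun ω => Q ω = b) / Fintype.card V ^ Fintype.card ι)
    (T : Finset ι) :
    entH P (fun ω => (Q ω, fun k : T => X k ω))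
      = entH P Q + T.card * logb 2 (Fintype.card V) := by
  have hQT := pr_and_restrict_eq_of_uniform hQX T
  have hT : ∀ g : T → V, pr P (fun ω => (fun k : T => X k ω) = g)
      = 1 / Fintype.card V ^ T.card := by
    intro g
    rw [pr_eq_sum_pr_and _ Q, ← sum_pr_eq_one hP1 Q, sum_div]
    exact sum_congr rfl fun b _ =>
      (pr_congr fun ω => by rw [and_comm, funext_iff]).trans (hQT b g)
  rw [entH_pair_eq_add_of_indep hP1 _ _ fun b g => ?_,
    entH_eq_logb_card_of_uniform (fun ω (k : T) => X k ω) fun g => ?_,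
    Fintype.card_fun, Fintype.card_coe, Nat.cast_pow, logb_pow]
  · rw [hT, Fintype.card_fun, Fintype.card_coe, Nat.cast_pow, one_div]
  · rw [hT, mul_one_div, ← hQT b g]
    exact pr_congr fun ω => and_congr_right' funext_iff

lemma condH_restrict_compl_of_uniform [Fintype β] [Nonempty V] (hP1 : ∑ ω, P ω = 1)
    (hQX : ∀ b (f : ι → V), pr P (fun ω => Q ω = b ∧ ∀ i, X i ω = f i)
      = pr P (fun ω => Q ω = b) / Fintype.card V ^ Fintype.card ι)
    (M : Finset ι) :
    condH P (fun ω (k : M) => X k ω) (fun ω => (Q ω, fun k : ↥Mᶜ => X k ω))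
      = M.card * logb 2 (Fintype.card V) := by
  have hg : Function.Injective fun t : β × (↥(univ : Finset ι) → V) =>
      ((fun k : M => t.2 ⟨k, mem_univ _⟩), t.1, fun k : ↥Mᶜ => t.2 ⟨k, mem_univ _⟩) := by
    rintro ⟨b, f⟩ ⟨b', f'⟩ h
    simp only [Prod.mk.injEq, funext_iff, Subtype.forall] at h
    obtain ⟨hM, rfl, hMc⟩ := h
    refine Prod.ext rfl (funext fun ⟨i, _⟩ => ?_)
    by_cases hi : i ∈ M
    exacts [hM i hi, hMc i (mem_compl.2 hi)]
  have hjoint : entH P (fun ω => ((fun k : M => X k ω), Q ω, fun k : ↥Mᶜ => X k ω))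
      = entH P Q + (univ : Finset ι).card * logb 2 (Fintype.card V) :=
    (entH_comp_of_injective hg fun ω => (Q ω, fun k : ↥(univ : Finset ι) => X k ω)).trans
      (entH_pair_restrict_of_uniform hP1 hQX univ)
  have hcard : (M.card : ℝ) + Mᶜ.card = (univ : Finset ι).card := by
    exact_mod_cast (card_add_card_compl M).trans card_univ.symm
  rw [condH, hjoint, entH_pair_restrict_of_uniform hP1 hQX, ← hcard]
  ring

end UniformFamily

section Decoding

variable {Ω α β γ ι V : Type} [Fintype Ω] [Fintype α] [Fintype β] [Fintype γ] [DecidableEq ι]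
  [Fintype V] {P : Ω → ℝ} {N : ℕ}

def imageBelow (W : Fin N → ι) (m : ℕ) : Finset ι :=
  (univ.filter fun j : Fin N => (j : ℕ) < m).image W

lemma imageBelow_zero (W : Fin N → ι) : imageBelow W 0 = ∅ := by
  simp [imageBelow]

lemma imageBelow_succ (W : Fin N → ι) {m : ℕ} (hm : m < N) :
    imageBelow W (m + 1) = insert (W ⟨m, hm⟩) (imageBelow W m) := by
  rw [imageBelow, imageBelow, ← image_insert]
  congr 1
  ext j
  simp only [mem_insert, mem_filter, mem_univ, true_and, Fin.ext_iff]
  omega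

lemma imageBelow_self (W : Fin N → ι) : imageBelow W N = univ.image W := by
  simp [imageBelow]

lemma apply_notMem_imageBelow {W : Fin N → ι} (hW : ∀ i j, j < i → W i ≠ W j) (i : Fin N) :
    W i ∉ imageBelow W i := by
  simp only [imageBelow, mem_image, mem_filter, mem_univ, true_and, not_exists, not_and]
  exact fun j hj => (hW i j hj).symm

lemma mem_compl_image_of_notMem_imageBelow [Fintype ι] {W : Fin N → ι} {S : Fin N → Finset ι}
    (hWS : ∀ i, W i ∉ S i) (hWnew : ∀ i j : Fin N, j < i → W i ∉ S j ∪ {W j})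
    {i : Fin N} {k : ι} (hk : k ∈ S i) (hk' : k ∉ imageBelow W i) : k ∈ (univ.image W)ᶜ := by
  simp only [mem_compl, mem_image, mem_univ, true_and, not_exists]
  rintro j rfl
  rcases lt_trichotomy j i with h | rfl | h
  · exact hk' (mem_image.2 ⟨j, mem_filter.2 ⟨mem_univ _, h⟩, rfl⟩)
  · exact hWS j hk
  · exact hWnew j i h (mem_union_left _ hk)

lemma condH_restrict_insert_eq_zero {X : ι → Ω → V} {Z : Ω → γ} {w : ι} {D : Finset ι}
    (hw : w ∉ D) (hD : condH P (fun ω (k : D) => X k ω) Z = 0)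
    (hwD : condH P (X w) (fun ω => ((fun k : D => X k ω), Z ω)) = 0) :
    condH P (fun ω (k : ↥(insert w D)) => X k ω) Z = 0 := by
  let φ : V × (D → V) → (↥(insert w D) → V) := fun t k =>
    if hk : (k : ι) ∈ D then t.2 ⟨k, hk⟩ else t.1
  have hφ : Function.Injective φ := by
    rintro ⟨v, f⟩ ⟨v', f'⟩ h
    refine Prod.ext ?_ (funext fun k => ?_)
    · simpa [φ, hw] using congrFun h ⟨w, mem_insert_self w D⟩
    · simpa [φ] using congrFun h ⟨k, mem_insert_of_mem k.2⟩
  have hX : (fun ω (k : ↥(insert w D)) => X k ω) = fun ω => φ (X w ω, fun k : D => X k ω) := by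
    funext ω k
    by_cases hk : (k : ι) ∈ D
    · simp [φ, hk]
    · simp [φ, (mem_insert.1 k.2).resolve_right hk]
  rw [hX, condH_comp_left_of_injective hφ, condH_chain, hD, hwD, add_zero]

lemma condH_restrict_image_eq_zero [Fintype ι] (hP0 : ∀ ω, 0 ≤ P ω) (A : Ω → α) (Q : Ω → β)
    (X : ι → Ω → V) (W : Fin N → ι) (S : Fin N → Finset ι) (hWS : ∀ i, W i ∉ S i)
    (hWnew : ∀ i j : Fin N, j < i → W i ∉ S j ∪ {W j})
    (hdec : ∀ i : Fin N,
      condH P (X (W i)) (fun ω => (A ω, Q ω, fun k : S i => X k.1 ω)) = 0) :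
    condH P (fun ω (k : ↥(univ.image W)) => X k ω)
      (fun ω => (A ω, Q ω, fun k : ↥(univ.image W)ᶜ => X k ω)) = 0 := by
  have hW : ∀ i j : Fin N, j < i → W i ≠ W j := fun i j h he => hWnew i j h (by simp [he])
  suffices h : ∀ m ≤ N, condH P (fun ω (k : ↥(imageBelow W m)) => X k ω)
      (fun ω => (A ω, Q ω, fun k : ↥(univ.image W)ᶜ => X k ω)) = 0 by
    have := h N le_rfl
    rwa [imageBelow_self] at this
  intro m
  induction m with
  | zero =>
    intro _
    rw [imageBelow_zero]
    exact condH_eq_zero_of_unique _ _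
  | succ m ih =>
    intro hm
    set i : Fin N := ⟨m, hm⟩
    rw [imageBelow_succ W hm]
    refine condH_restrict_insert_eq_zero (apply_notMem_imageBelow hW i) (ih (Nat.le_of_succ_le hm))
      (le_antisymm ?_ (condH_nonneg hP0 _ _))
    -- the variables `X k` with `k ∈ S i` are among those already decoded or those conditioned on
    refine (condH_le_of_comp hP0 _ _ _ (fun t => (t.2.1, t.2.2.1, fun k : S i =>
      if hk : (k : ι) ∈ imageBelow W m then t.1 ⟨k, hk⟩
      else t.2.2.2 ⟨k, mem_compl_image_of_notMem_imageBelow hWS hWnew k.2 hk⟩))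
        fun ω => ?_).trans (hdec i).le
    refine Prod.ext rfl (Prod.ext rfl (funext fun k => ?_))
    dsimp only
    split_ifs <;> rfl

end Decoding

theorem stmt1 {Ω α β F : Type} [Fintype Ω] [Fintype α] [Fintype β]
    [Field F] [Fintype F] {n K N : ℕ}
    (P : Ω → ℝ) (hP0 : ∀ ω, 0 ≤ P ω) (hP1 : ∑ ω, P ω = 1)
    (A : Ω → α) (Q : Ω → β) (X : Fin K → Ω → (Fin n → F))
    -- the X_i are mutually independent
    (hXindep : ∀ f : Fin K → (Fin n → F),
      pr P (fun ω => ∀ i, X i ω = f i) = ∏ i, pr P (fun ω => X i ω = f i))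
    -- each X_i is uniformly distributed on F_q^n
    (hXunif : ∀ (i : Fin K) (v : Fin n → F),
      pr P (fun ω => X i ω = v) = (Fintype.card (Fin n → F) : ℝ)⁻¹)
    -- Q is independent of the tuple (X_1, ..., X_K)
    (hQindep : ∀ (b : β) (f : Fin K → (Fin n → F)),
      pr P (fun ω => Q ω = b ∧ ∀ i, X i ω = f i)
        = pr P (fun ω => Q ω = b) * pr P (fun ω => ∀ i, X i ω = f i))
    (W : Fin N → Fin K) (S : Fin N → Finset (Fin K))
    -- W_i ∉ S_i
    (hWS : ∀ i, W i ∉ S i)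
    -- W_i ∉ ⋃_{j < i} (S_j ∪ {W_j})
    (hWnew : ∀ i j : Fin N, j < i → W i ∉ S j ∪ {W j})
    -- H(X_{W_i} | (A, Q, (X_k)_{k ∈ S_i})) = 0
    (hdec : ∀ i : Fin N,
      condH P (X (W i)) (fun ω => (A ω, Q ω, fun k : S i => X k.1 ω)) = 0) :
    (N : ℝ) * ((n : ℝ) * Real.logb 2 (Fintype.card F)) ≤ entH P A := by
  have hQX : ∀ b (f : Fin K → Fin n → F), pr P (fun ω => Q ω = b ∧ ∀ i, X i ω = f i)
      = pr P (fun ω => Q ω = b) / Fintype.card (Fin n → F) ^ Fintype.card (Fin K) := by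
    intro b f
    rw [hQindep, hXindep, prod_congr rfl fun i _ => hXunif i (f i), prod_const, card_univ,
      inv_pow, div_eq_mul_inv]
  have hW : Function.Injective W := fun i j hij => by
    by_contra hne
    rcases lt_or_gt_of_ne hne with h | h
    · exact hWnew j i h (by simp [hij])
    · exact hWnew i j h (by simp [hij])
  calc (N : ℝ) * ((n : ℝ) * logb 2 (Fintype.card F))
      = (univ.image W).card * logb 2 (Fintype.card (Fin n → F)) := by
        rw [card_image_of_injective _ hW, card_univ, Fintype.card_fin, Fintype.card_fun,
          Fintype.card_fin, Nat.cast_pow, logb_pow]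
    _ = condH P (fun ω (k : ↥(univ.image W)) => X k ω)
          (fun ω => (Q ω, fun k : ↥(univ.image W)ᶜ => X k ω)) :=
        (condH_restrict_compl_of_uniform hP1 hQX _).symm
    _ ≤ entH P A := condH_le_entH_of_condH_eq_zero hP0 hP1
        (condH_restrict_image_eq_zero hP0 A Q X W S hWS hWnew hdec)
end

section
/- Let W be a random variable valued in {1,…,K}, S a random variable valued in M-element subsets of {1,…,K}, and Q a finitely-valued random variable, all on a finite probability space. Fix a value q with P(Q=q) > 0 and suppose q corresponds to a partition of {1,…,K} into N parts q_1, …, q_N, each of size M+1. For each w ∈ {1,…,K}, let s_w denote the part containing w with w removed. Let L > 0 be a real constant and Γ(w) ∈ [0,1] for each w. Assume for every w ∈ {1,…,K}: (a) the event {Q=q} ∩ {W=w} is contained in {S=s_w}; (b) P(W=w, S=s_w) > 0 and P(Q=q | W=w, S=s_w) = Γ(w)/(N·L). If for all w, w' ∈ {1,…,K} one has Γ(w')·P(W=w', S=s_{w'})·P(W=w) = Γ(w)·P(W=w, S=s_w)·P(W=w'), then for every w ∈ {1,…,K}, P(W=w | Q=q) = P(W=w). -/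
/-! On `{Q = q0}` the value `W = w` forces `S = s_w`, so condition (b) gives
`P(W = w, Q = q0) = Γ(w) P(W = w, S = s_w) / (N L)`. The proportionality condition says exactly
that this joint law is proportional to the law of `W`; summing over `w` identifies the constant
as `P(Q = q0)`. -/

lemma div_sum_eq_of_mul_eq_mul {ι 𝕜 : Type*} [Semifield 𝕜] {s : Finset ι} {f g : ι → 𝕜}
    (hg : ∑ i ∈ s, g i = 1) (hf : ∑ i ∈ s, f i ≠ 0) (h : ∀ i j, f i * g j = f j * g i) (j : ι) :
    f j / ∑ i ∈ s, f i = g j := by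
  rw [div_eq_iff hf]
  calc f j = f j * ∑ i ∈ s, g i := by rw [hg, mul_one]
    _ = ∑ i ∈ s, f i * g j := by
      rw [Finset.mul_sum]; exact Finset.sum_congr rfl fun i _ => h j i
    _ = g j * ∑ i ∈ s, f i := by rw [← Finset.sum_mul, mul_comm]

open scoped Classical in
lemma sum_pr_fiber_and {Ω α : Type} [Fintype Ω] [Fintype α] (P : Ω → ℝ) (f : Ω → α)
    (E : Ω → Prop) : ∑ a, pr P (fun ω => f ω = a ∧ E ω) = pr P E := by
  unfold pr
  rw [Finset.sum_comm]
  refine Finset.sum_congr rfl fun ω _ => ?_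
  by_cases hE : E ω <;> simp [hE]

lemma sum_pr_fiber {Ω α : Type} [Fintype Ω] [Fintype α] (P : Ω → ℝ) (f : Ω → α) :
    ∑ a, pr P (fun ω => f ω = a) = ∑ ω, P ω := by
  have h := sum_pr_fiber_and P f (fun _ => True)
  simp only [and_true] at h
  rw [h]
  simp [pr]

theorem stmt3_general {Ω β : Type} [Fintype Ω]
    {K N : ℕ}
    (P : Ω → ℝ) (hP1 : ∑ ω, P ω = 1)
    (W : Ω → Fin K) (S : Ω → Finset (Fin K)) (Q : Ω → β)
    (q0 : β) (hq0 : 0 < pr P (fun ω => Q ω = q0))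
    -- q0 corresponds to a partition of {1,…,K} into N parts, each of size M+1
    (qs : Fin N → Finset (Fin K))
    -- `part w` is the index of the part containing `w`; `s_w = qs (part w) \ {w}`
    (part : Fin K → Fin N)
    (L : ℝ)
    (Γ : Fin K → ℝ)
    -- (a) the event {Q = q0} ∩ {W = w} is contained in {S = s_w}
    (ha : ∀ (w : Fin K) (ω : Ω), Q ω = q0 → W ω = w → S ω = (qs (part w)).erase w)
    -- (b) P(W=w, S=s_w) > 0 and P(Q=q0 | W=w, S=s_w) = Γ(w)/(N·L)
    (hb : ∀ w : Fin K,
      0 < pr P (fun ω => W ω = w ∧ S ω = (qs (part w)).erase w) ∧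
      pr P (fun ω => Q ω = q0 ∧ W ω = w ∧ S ω = (qs (part w)).erase w)
          / pr P (fun ω => W ω = w ∧ S ω = (qs (part w)).erase w)
        = Γ w / ((N : ℝ) * L))
    -- proportionality condition
    (hprop : ∀ w w' : Fin K,
      Γ w' * pr P (fun ω => W ω = w' ∧ S ω = (qs (part w')).erase w')
          * pr P (fun ω => W ω = w)
        = Γ w * pr P (fun ω => W ω = w ∧ S ω = (qs (part w)).erase w)
          * pr P (fun ω => W ω = w')) :
    ∀ w : Fin K,
      pr P (fun ω => W ω = w ∧ Q ω = q0) / pr P (fun ω => Q ω = q0)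
        = pr P (fun ω => W ω = w) := by
  have joint : ∀ v, pr P (fun ω => W ω = v ∧ Q ω = q0) =
      Γ v * pr P (fun ω => W ω = v ∧ S ω = (qs (part v)).erase v) / (N * L) := fun v => by
    rw [mul_div_right_comm, ← (hb v).2, div_mul_cancel₀ _ (hb v).1.ne']
    congr 1
    ext ω
    exact ⟨fun ⟨hW, hQ⟩ => ⟨hQ, hW, ha v ω hQ hW⟩, fun ⟨hQ, hW, _⟩ => ⟨hW, hQ⟩⟩
  rw [← sum_pr_fiber_and P W (fun ω => Q ω = q0)] at hq0 ⊢
  refine div_sum_eq_of_mul_eq_mul (sum_pr_fiber P W ▸ hP1) hq0.ne' fun v v' => ?_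
  rw [joint, joint]
  linear_combination hprop v' v / (N * L)

theorem stmt3 {Ω β : Type} [Fintype Ω] [Fintype β]
    {K M N : ℕ} (hM : 1 ≤ M) (hMK : M + 1 ≤ K) (hK : K = N * (M + 1))
    (P : Ω → ℝ) (hP0 : ∀ ω, 0 ≤ P ω) (hP1 : ∑ ω, P ω = 1)
    (W : Ω → Fin K) (S : Ω → Finset (Fin K)) (Q : Ω → β)
    (q0 : β) (hq0 : 0 < pr P (fun ω => Q ω = q0))
    -- q0 corresponds to a partition of {1,…,K} into N parts, each of size M+1
    (qs : Fin N → Finset (Fin K))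
    (hqdisj : ∀ i j, i ≠ j → Disjoint (qs i) (qs j))
    (hqcard : ∀ i, (qs i).card = M + 1)
    (hqcover : ∀ k : Fin K, ∃ i, k ∈ qs i)
    -- `part w` is the index of the part containing `w`; `s_w = qs (part w) \ {w}`
    (part : Fin K → Fin N) (hpart : ∀ w, w ∈ qs (part w))
    (L : ℝ) (hL : 0 < L)
    (Γ : Fin K → ℝ) (hΓ : ∀ w, 0 ≤ Γ w ∧ Γ w ≤ 1)
    -- (a) the event {Q = q0} ∩ {W = w} is contained in {S = s_w}
    (ha : ∀ (w : Fin K) (ω : Ω), Q ω = q0 → W ω = w → S ω = (qs (part w)).erase w)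
    -- (b) P(W=w, S=s_w) > 0 and P(Q=q0 | W=w, S=s_w) = Γ(w)/(N·L)
    (hb : ∀ w : Fin K,
      0 < pr P (fun ω => W ω = w ∧ S ω = (qs (part w)).erase w) ∧
      pr P (fun ω => Q ω = q0 ∧ W ω = w ∧ S ω = (qs (part w)).erase w)
          / pr P (fun ω => W ω = w ∧ S ω = (qs (part w)).erase w)
        = Γ w / ((N : ℝ) * L))
    -- proportionality condition
    (hprop : ∀ w w' : Fin K,
      Γ w' * pr P (fun ω => W ω = w' ∧ S ω = (qs (part w')).erase w')
          * pr P (fun ω => W ω = w)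
        = Γ w * pr P (fun ω => W ω = w ∧ S ω = (qs (part w)).erase w)
          * pr P (fun ω => W ω = w')) :
    ∀ w : Fin K,
      pr P (fun ω => W ω = w ∧ Q ω = q0) / pr P (fun ω => Q ω = q0)
        = pr P (fun ω => W ω = w) :=
  stmt3_general P hP1 W S Q q0 hq0 qs part L Γ ha hb hprop
end

section
/- Let K and M be integers with 1 ≤ M ≤ K−1 and let λ_1 ≥ λ_2 ≥ ⋯ ≥ λ_K > 0 be real numbers. For any indices i_1 ≤ i_2 in {1,…,K}: Σ_{T} 1/λ_T̄, summed over all M-element subsets T of {1,…,K}∖{i_1}, is at most Σ_{T} 1/λ_T̄ summed over all M-element subsets T of {1,…,K}∖{i_2}. -/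
/-!
Swapping `i₁` and `i₂` maps the `M`-subsets of `{1,…,K} ∖ {i₁}` bijectively onto those of
`{1,…,K} ∖ {i₂}`. A subset `T` avoiding `i₂` is fixed, and one containing `i₂` is sent to
`T - i₂ + i₁`, whose complement weight drops by `λ_{i₁} - λ_{i₂} ≥ 0`; so the swap never
decreases `1 / λ_T̄`.
-/

/-- `lbar K lam T = Σ_{k ∈ {1,…,K} \ T} λ_k`. -/
noncomputable def lbar (K : ℕ) (lam : ℕ → ℝ) (T : Finset ℕ) : ℝ :=
  ∑ k ∈ Finset.Icc 1 K \ T, lam k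

/-- The joint pmf `p(w, s) = (1 / C(K,M)) · λ_w / λ_s̄`. -/
noncomputable def pjoint (K M : ℕ) (lam : ℕ → ℝ) (w : ℕ) (s : Finset ℕ) : ℝ :=
  (1 / (K.choose M : ℝ)) * (lam w / lbar K lam s)

/-- The marginal `p_W(w) = Σ_s p(w, s)`, summed over `M`-subsets of `{1,…,K} \ {w}`. -/
noncomputable def pW (K M : ℕ) (lam : ℕ → ℝ) (w : ℕ) : ℝ :=
  ∑ s ∈ Finset.powersetCard M ((Finset.Icc 1 K).erase w), pjoint K M lam w s

open Finset Equiv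

section Swap

variable {α : Type*} [DecidableEq α] {S : Finset α} {a b : α}

lemma setOf_swap_apply_ne_subset (ha : a ∈ S) (hb : b ∈ S) :
    {x | swap a b x ≠ x} ⊆ (S : Set α) := by
  intro x hx
  by_contra hxS
  exact hx (swap_apply_of_ne_of_ne (by rintro rfl; exact hxS ha) (by rintro rfl; exact hxS hb))

lemma map_swap_erase (ha : a ∈ S) (hb : b ∈ S) :
    (S.erase a).map (swap a b).toEmbedding = S.erase b := by
  rw [map_erase, map_perm (setOf_swap_apply_ne_subset ha hb)]
  simp

lemma sum_powersetCard_erase_eq_sum_map_swap {M : ℕ} (ha : a ∈ S) (hb : b ∈ S)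
    (g : Finset α → ℝ) :
    ∑ T ∈ powersetCard M (S.erase b), g T
      = ∑ T ∈ powersetCard M (S.erase a), g (T.map (swap a b).toEmbedding) := by
  rw [← map_swap_erase ha hb, powersetCard_map, sum_map]
  rfl

lemma sum_comp_swap_le {U : Finset α} {f : α → ℝ} (ha : a ∈ U) (hab : f b ≤ f a) :
    ∑ k ∈ U, f (swap a b k) ≤ ∑ k ∈ U, f k := by
  by_cases hb : b ∈ U
  · exact (Perm.sum_comp _ U f (setOf_swap_apply_ne_subset ha hb)).le
  have hfix : ∀ k ∈ U.erase a, f (swap a b k) = f k := fun k hk =>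
    congrArg f (swap_apply_of_ne_of_ne (ne_of_mem_erase hk)
      (by rintro rfl; exact hb (mem_of_mem_erase hk)))
  rw [← add_sum_erase U _ ha, ← add_sum_erase U f ha, sum_congr rfl hfix, swap_apply_left]
  linarith

lemma sum_sdiff_map_swap_le {T : Finset α} {f : α → ℝ} (ha : a ∈ S) (hb : b ∈ S) (haT : a ∉ T)
    (hab : f b ≤ f a) :
    ∑ k ∈ S \ T.map (swap a b).toEmbedding, f k ≤ ∑ k ∈ S \ T, f k := by
  have hS := map_perm (setOf_swap_apply_ne_subset ha hb)
  rw [← hS, ← Finset.map_sdiff, sum_map, hS]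
  exact sum_comp_swap_le (mem_sdiff.2 ⟨ha, haT⟩) hab

lemma sum_sdiff_pos {T : Finset α} {f : α → ℝ} (hf : ∀ k ∈ S, 0 < f k) (hb : b ∈ S)
    (hbT : b ∉ T) : 0 < ∑ k ∈ S \ T, f k :=
  sum_pos (fun k hk => hf k (mem_sdiff.1 hk).1) ⟨b, mem_sdiff.2 ⟨hb, hbT⟩⟩

theorem sum_powersetCard_erase_one_div_sum_sdiff_le {M : ℕ} {f : α → ℝ}
    (hf : ∀ k ∈ S, 0 < f k) (ha : a ∈ S) (hb : b ∈ S) (hab : f b ≤ f a) :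
    ∑ T ∈ powersetCard M (S.erase a), 1 / ∑ k ∈ S \ T, f k
      ≤ ∑ T ∈ powersetCard M (S.erase b), 1 / ∑ k ∈ S \ T, f k := by
  rw [sum_powersetCard_erase_eq_sum_map_swap ha hb]
  refine sum_le_sum fun T hT => ?_
  have haT : a ∉ T := fun h => (notMem_erase a S) ((mem_powersetCard.1 hT).1 h)
  have hbT : b ∉ T.map (swap a b).toEmbedding := by
    simpa [swap_apply_of_ne_of_ne, swap_apply_right] using haT
  exact one_div_le_one_div_of_le (sum_sdiff_pos hf hb hbT) (sum_sdiff_map_swap_le ha hb haT hab)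

end Swap

theorem stmt5_general {K M : ℕ} (lam : ℕ → ℝ)
    (hmono : ∀ i j, 1 ≤ i → i ≤ j → j ≤ K → lam j ≤ lam i)
    (hpos : ∀ i, 1 ≤ i → i ≤ K → 0 < lam i)
    (i₁ i₂ : ℕ) (hi₁ : i₁ ∈ Finset.Icc 1 K) (hi₂ : i₂ ∈ Finset.Icc 1 K) (h12 : i₁ ≤ i₂) :
    ∑ T ∈ Finset.powersetCard M ((Finset.Icc 1 K).erase i₁), 1 / lbar K lam T
      ≤ ∑ T ∈ Finset.powersetCard M ((Finset.Icc 1 K).erase i₂), 1 / lbar K lam T := by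
  have hpos' : ∀ k ∈ Finset.Icc 1 K, 0 < lam k := fun k hk =>
    hpos k (mem_Icc.1 hk).1 (mem_Icc.1 hk).2
  exact sum_powersetCard_erase_one_div_sum_sdiff_le hpos' hi₁ hi₂
    (hmono i₁ i₂ (mem_Icc.1 hi₁).1 h12 (mem_Icc.1 hi₂).2)

theorem stmt5 {K M : ℕ} (hM : 1 ≤ M) (hMK : M + 1 ≤ K) (lam : ℕ → ℝ)
    (hmono : ∀ i j, 1 ≤ i → i ≤ j → j ≤ K → lam j ≤ lam i)
    (hpos : ∀ i, 1 ≤ i → i ≤ K → 0 < lam i)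
    (i₁ i₂ : ℕ) (hi₁ : i₁ ∈ Finset.Icc 1 K) (hi₂ : i₂ ∈ Finset.Icc 1 K) (h12 : i₁ ≤ i₂) :
    ∑ T ∈ Finset.powersetCard M ((Finset.Icc 1 K).erase i₁), 1 / lbar K lam T
      ≤ ∑ T ∈ Finset.powersetCard M ((Finset.Icc 1 K).erase i₂), 1 / lbar K lam T :=
  stmt5_general lam hmono hpos i₁ i₂ hi₁ hi₂ h12
end

section
/- Let K and M be integers with 1 ≤ M ≤ K−1 and let λ_1 ≥ λ_2 ≥ ⋯ ≥ λ_K > 0 be real numbers. Then the minimum, over all w ∈ {1,…,K} and all M-element subsets s of {1,…,K}∖{w}, of the ratio p(w,s)/p_W(w) equals the minimum over i ∈ {K−M,…,K} of p({i}, {K−M,…,K}∖{i}) / p_W(i). -/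
/-!
Writing `Z(w) = Σ_s 1 / λ_s̄`, the ratio is `p(w, s) / p_W(w) = 1 / (λ_s̄ · Z(w))`, so minimising
it means maximising `λ_s̄ · Z(w)`. Exchanging `w` and `v` in every `s` shows that
`Z(w) ≤ Z(v)` whenever `λ_v ≤ λ_w`; in particular `Z(w) ≤ Z(i)` for `i = max w (K - M)`.
The complement of `s` consists of `w` and `K - M - 1` other indices, and the `k`-th smallest of
them is at least `k`, so `λ_s̄ ≤ λ_i + λ_1 + ⋯ + λ_{K-M-1}`, the complement weight of
`{K - M, …, K} ∖ {i}`.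
-/

open Finset

theorem sum_le_sum_Icc_card_of_antitoneOn {β : Type*} [AddCommMonoid β] [PartialOrder β]
    [IsOrderedAddMonoid β] {K : ℕ} {f : ℕ → β} (hf : AntitoneOn f (Set.Icc 1 K))
    {T : Finset ℕ} (hT : T ⊆ Icc 1 K) : ∑ k ∈ T, f k ≤ ∑ k ∈ Icc 1 #T, f k := by
  induction T using Finset.induction_on_max with
  | empty => simp
  | insert a s hlt ih =>
    have has : a ∉ s := fun h => (hlt a h).false
    obtain ⟨ha1, haK⟩ := mem_Icc.1 (hT (mem_insert_self a s))
    have hsa : s ⊆ Icc 1 (a - 1) := fun x hx =>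
      mem_Icc.2 ⟨(mem_Icc.1 (hT (mem_insert_of_mem hx))).1, by have := hlt x hx; omega⟩
    have hcard : #s + 1 ≤ a := by
      have := card_le_card hsa; simp only [Nat.card_Icc] at this; omega
    rw [sum_insert has, card_insert_of_notMem has, sum_Icc_succ_top (Nat.le_add_left 1 #s),
      add_comm]
    exact add_le_add (ih fun x hx => hT (mem_insert_of_mem hx))
      (hf ⟨le_add_self, hcard.trans haK⟩ ⟨ha1, haK⟩ hcard)

theorem Finset.map_swap_eq_self {α : Type*} [DecidableEq α] {A : Finset α} {w v : α}
    (hw : w ∈ A) (hv : v ∈ A) : A.map (Equiv.swap w v).toEmbedding = A :=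
  map_perm fun x hx => by
    rcases (Equiv.swap_apply_ne_self_iff.1 hx).2 with rfl | rfl <;> assumption

section Model

variable {K M : ℕ} {lam : ℕ → ℝ}

theorem lbar_eq_sub {s : Finset ℕ} (hs : s ⊆ Icc 1 K) :
    lbar K lam s = ∑ k ∈ Icc 1 K, lam k - ∑ k ∈ s, lam k :=
  sum_sdiff_eq_sub hs

theorem lbar_pos (hpos : ∀ i ∈ Icc 1 K, 0 < lam i) {s : Finset ℕ} (hs : #s < K) :
    0 < lbar K lam s := by
  refine sum_pos (fun k hk => hpos k (mem_sdiff.1 hk).1) (sdiff_nonempty.2 fun hsub => ?_)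
  have := card_le_card hsub
  simp only [Nat.card_Icc] at this
  omega

noncomputable def invLbarSum (K M : ℕ) (lam : ℕ → ℝ) (w : ℕ) : ℝ :=
  ∑ s ∈ powersetCard M ((Icc 1 K).erase w), (lbar K lam s)⁻¹

theorem pW_eq_mul_invLbarSum (w : ℕ) :
    pW K M lam w = (K.choose M : ℝ)⁻¹ * lam w * invLbarSum K M lam w := by
  simp [pW, pjoint, invLbarSum, mul_sum, div_eq_mul_inv, mul_assoc]

theorem pjoint_div_pW (hMK : M ≤ K) {w : ℕ} (hw : lam w ≠ 0) (s : Finset ℕ) :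
    pjoint K M lam w s / pW K M lam w = (lbar K lam s * invLbarSum K M lam w)⁻¹ := by
  have hc : (K.choose M : ℝ) ≠ 0 := Nat.cast_ne_zero.2 (Nat.choose_pos hMK).ne'
  rw [pW_eq_mul_invLbarSum, pjoint]
  field_simp

theorem invLbarSum_pos (hpos : ∀ i ∈ Icc 1 K, 0 < lam i) (hMK : M < K) (w : ℕ) :
    0 < invLbarSum K M lam w := by
  refine sum_pos (fun s hs => inv_pos.2 (lbar_pos hpos ?_)) (powersetCard_nonempty.2 ?_)
  · rw [(mem_powersetCard.1 hs).2]; exact hMK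
  · have := pred_card_le_card_erase (s := Icc 1 K) (a := w)
    simp only [Nat.card_Icc] at this
    omega

theorem lbar_map_swap_le {w v : ℕ} (hw : w ∈ Icc 1 K) (hv : v ∈ Icc 1 K)
    (hle : lam v ≤ lam w) {s : Finset ℕ} (hs : s ⊆ Icc 1 K) (hws : w ∉ s) :
    lbar K lam (s.map (Equiv.swap w v).toEmbedding) ≤ lbar K lam s := by
  have hmap : s.map (Equiv.swap w v).toEmbedding ⊆ Icc 1 K :=
    map_swap_eq_self hw hv ▸ map_subset_map.2 hs
  rw [lbar_eq_sub hmap, lbar_eq_sub hs, sum_map]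
  refine sub_le_sub_left (sum_le_sum fun x hx => ?_) _
  by_cases hxv : x = v
  · simpa [hxv] using hle
  · rw [Equiv.toEmbedding_apply, Equiv.swap_apply_of_ne_of_ne (ne_of_mem_of_not_mem hx hws) hxv]

theorem invLbarSum_le_of_le (hpos : ∀ i ∈ Icc 1 K, 0 < lam i) (hMK : M < K) {w v : ℕ}
    (hw : w ∈ Icc 1 K) (hv : v ∈ Icc 1 K) (hle : lam v ≤ lam w) :
    invLbarSum K M lam w ≤ invLbarSum K M lam v := by
  set σ := (Equiv.swap w v).toEmbedding
  have hP : powersetCard M ((Icc 1 K).erase v)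
      = (powersetCard M ((Icc 1 K).erase w)).map (mapEmbedding σ).toEmbedding := by
    rw [← powersetCard_map, map_erase, map_swap_eq_self hw hv, Equiv.toEmbedding_apply,
      Equiv.swap_apply_left]
  rw [invLbarSum, invLbarSum, hP, sum_map]
  refine sum_le_sum fun s hs => ?_
  obtain ⟨hsub, hcard⟩ := mem_powersetCard.1 hs
  refine inv_anti₀ (lbar_pos hpos ?_) ?_
  · simpa [hcard] using hMK
  · exact lbar_map_swap_le hw hv hle (hsub.trans (erase_subset w _))
      fun h => (mem_erase.1 (hsub h)).1 rfl

theorem Icc_sdiff_Icc_erase (hMK : M < K) {i : ℕ} (hi : i ∈ Icc (K - M) K) :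
    Icc 1 K \ (Icc (K - M) K).erase i = insert i (Icc 1 (K - M - 1)) := by
  have := mem_Icc.1 hi
  ext k
  simp only [mem_sdiff, mem_erase, mem_Icc, mem_insert]
  omega

theorem Icc_erase_mem_powersetCard (hMK : M < K) {i : ℕ} (hi : i ∈ Icc (K - M) K) :
    (Icc (K - M) K).erase i ∈ powersetCard M ((Icc 1 K).erase i) := by
  have := mem_Icc.1 hi
  refine mem_powersetCard.2 ⟨erase_subset_erase i fun k hk => ?_, ?_⟩
  · have := mem_Icc.1 hk; exact mem_Icc.2 ⟨by omega, this.2⟩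
  · rw [card_erase_of_mem hi, Nat.card_Icc]; omega

theorem lbar_Icc_erase (hMK : M < K) {i : ℕ} (hi : i ∈ Icc (K - M) K) :
    lbar K lam ((Icc (K - M) K).erase i) = lam i + ∑ k ∈ Icc 1 (K - M - 1), lam k := by
  rw [lbar, Icc_sdiff_Icc_erase hMK hi, sum_insert]
  intro h
  have := (mem_Icc.1 h).2
  have := (mem_Icc.1 hi).1
  omega

theorem max_sub_mem_Icc {w : ℕ} (hw : w ∈ Icc 1 K) : max w (K - M) ∈ Icc (K - M) K :=
  mem_Icc.2 ⟨le_max_right _ _, max_le (mem_Icc.1 hw).2 (Nat.sub_le K M)⟩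

theorem lbar_le_lbar_Icc_erase (hmono : AntitoneOn lam (Set.Icc 1 K)) (hMK : M < K) {w : ℕ}
    (hw : w ∈ Icc 1 K) {s : Finset ℕ} (hs : s ∈ powersetCard M ((Icc 1 K).erase w)) :
    lbar K lam s ≤ lbar K lam ((Icc (K - M) K).erase (max w (K - M))) := by
  obtain ⟨hsub, hcard⟩ := mem_powersetCard.1 hs
  have hsA : s ⊆ Icc 1 K := hsub.trans (erase_subset w _)
  have hwC : w ∈ Icc 1 K \ s := mem_sdiff.2 ⟨hw, fun h => (mem_erase.1 (hsub h)).1 rfl⟩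
  have hC : #(Icc 1 K \ s) = K - M := by
    rw [card_sdiff_of_subset hsA, Nat.card_Icc, hcard, Nat.add_sub_cancel]
  rw [lbar_Icc_erase hMK (max_sub_mem_Icc hw), lbar]
  obtain ⟨n, hn⟩ : ∃ n, K - M = n + 1 := ⟨K - M - 1, by omega⟩
  rw [hn] at hC ⊢
  rw [Nat.add_sub_cancel]
  rcases le_total (n + 1) w with h | h
  · rw [max_eq_left h, ← add_sum_erase _ lam hwC]
    have := sum_le_sum_Icc_card_of_antitoneOn hmono
      ((erase_subset w _).trans (sdiff_subset (t := s)))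
    rw [card_erase_of_mem hwC, hC, Nat.add_sub_cancel] at this
    exact add_le_add_right this _
  · rw [max_eq_right h, add_comm, ← sum_Icc_succ_top (Nat.le_add_left 1 n), ← hC]
    exact sum_le_sum_Icc_card_of_antitoneOn hmono sdiff_subset

theorem pjoint_div_pW_Icc_erase_le (hmono : AntitoneOn lam (Set.Icc 1 K))
    (hpos : ∀ i ∈ Icc 1 K, 0 < lam i) (hMK : M < K) {w : ℕ} (hw : w ∈ Icc 1 K) {s : Finset ℕ}
    (hs : s ∈ powersetCard M ((Icc 1 K).erase w)) :
    pjoint K M lam (max w (K - M)) ((Icc (K - M) K).erase (max w (K - M)))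
        / pW K M lam (max w (K - M))
      ≤ pjoint K M lam w s / pW K M lam w := by
  have hi := max_sub_mem_Icc (M := M) hw
  have hiA : max w (K - M) ∈ Icc 1 K :=
    mem_Icc.2 ⟨le_max_of_le_left (mem_Icc.1 hw).1, (mem_Icc.1 hi).2⟩
  rw [pjoint_div_pW hMK.le (hpos _ hw).ne', pjoint_div_pW hMK.le (hpos _ hiA).ne']
  refine inv_anti₀ (mul_pos (lbar_pos hpos ?_) (invLbarSum_pos hpos hMK w)) (mul_le_mul
    (lbar_le_lbar_Icc_erase hmono hMK hw hs)
    (invLbarSum_le_of_le hpos hMK hw hiA (hmono (mem_Icc.1 hw) (mem_Icc.1 hiA) (le_max_left _ _)))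
    (invLbarSum_pos hpos hMK w).le (lbar_pos hpos ?_).le)
  · rw [(mem_powersetCard.1 hs).2]; exact hMK
  · rw [(mem_powersetCard.1 (Icc_erase_mem_powersetCard hMK hi)).2]; exact hMK

end Model

theorem stmt7_general {K M : ℕ} (hMK : M + 1 ≤ K) (lam : ℕ → ℝ)
    (hmono : ∀ i j, 1 ≤ i → i ≤ j → j ≤ K → lam j ≤ lam i)
    (hpos : ∀ i, 1 ≤ i → i ≤ K → 0 < lam i) :
    sInf {x : ℝ | ∃ w ∈ Finset.Icc 1 K,
        ∃ s ∈ Finset.powersetCard M ((Finset.Icc 1 K).erase w),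
          x = pjoint K M lam w s / pW K M lam w}
      = sInf {x : ℝ | ∃ i ∈ Finset.Icc (K - M) K,
          x = pjoint K M lam i ((Finset.Icc (K - M) K).erase i) / pW K M lam i} := by
  have hanti : AntitoneOn lam (Set.Icc 1 K) := fun i hi j hj hij => hmono i j hi.1 hij hj.2
  have hpos_Icc : ∀ i ∈ Icc 1 K, 0 < lam i := fun i hi => hpos i (mem_Icc.1 hi).1 (mem_Icc.1 hi).2
  apply csInf_eq_csInf_of_forall_exists_le
  · rintro _ ⟨w, hw, s, hs, rfl⟩
    exact ⟨_, ⟨max w (K - M), max_sub_mem_Icc hw, rfl⟩,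
      pjoint_div_pW_Icc_erase_le hanti hpos_Icc hMK hw hs⟩
  · rintro _ ⟨i, hi, rfl⟩
    have hiA : i ∈ Icc 1 K := Icc_subset_Icc_left (by omega) hi
    exact ⟨_, ⟨i, hiA, _, Icc_erase_mem_powersetCard hMK hi, rfl⟩, le_rfl⟩

theorem stmt7 {K M : ℕ} (hM : 1 ≤ M) (hMK : M + 1 ≤ K) (lam : ℕ → ℝ)
    (hmono : ∀ i j, 1 ≤ i → i ≤ j → j ≤ K → lam j ≤ lam i)
    (hpos : ∀ i, 1 ≤ i → i ≤ K → 0 < lam i) :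
    sInf {x : ℝ | ∃ w ∈ Finset.Icc 1 K,
        ∃ s ∈ Finset.powersetCard M ((Finset.Icc 1 K).erase w),
          x = pjoint K M lam w s / pW K M lam w}
      = sInf {x : ℝ | ∃ i ∈ Finset.Icc (K - M) K,
          x = pjoint K M lam i ((Finset.Icc (K - M) K).erase i) / pW K M lam i} :=
  stmt7_general hMK lam hmono hpos
end
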